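/- Let G be a finite simple graph with vertex set V(G) = {v_1, …, v_n} and let 1 < k < n. Suppose that: (1) N[v_1] ∪ … ∪ N[v_k] = V(G); (2) N[v_1] ∩ (N[v_2] ∪ … ∪ N[v_k]) = ∅; (3) |d(v_i) − d(v_j)| ≠ 1 for every i ∈ {1,…,k} and every j ∈ {1,…,n} with j ≠ i; (4) v_1 is the unique vertex of G of degree d(v_1); (5) for every i ∈ {2,…,k}, every vertex of G having degree d(v_i) lies in {v_2,…,v_k}. Let G' be a finite simple graph with vertex set V(G') = {v'_1, …, v'_n} such that for every j ∈ {1,…,n} the vertex-deleted subgraph G − v_j is isomorphic to G' − v'_j. Then every isomorphism f_1 : G − v_1 → G' − v'_1 maps the set V(G) \ N[v_1] onto the set V(G') \ N[v'_1]. -/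

import Mathlib

/-!
Hypomorphic graphs on `n ≠ 2` vertices have the same degrees, since `|E(G - v)| = |E(G)| - d(v)`
summed over `v` determines `|E(G)|`. If no vertex has degree `d + 1`, the vertices of degree `d`
in `G - j` are exactly the vertices of degree `d` not adjacent to `j`; comparing `G - j` with
`G' - j` shows that `j` has equally many neighbours of degree `d` in `G` and in `G'`.
For `d = d(v₁)`, which by (4) is attained only at `v₁`, this gives `N_G(v₁) = N_G'(v₁)`.

Now let `x ∉ N[v₁]` with `y = f₁ x ∈ N'(v₁)`; then `d(y) = d(x) + 1`. By (1) and (2), `x` is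
`v_i` or a neighbour of `v_i` for some `2 ≤ i ≤ k`. The first case contradicts (3). In the
second, (2) and (3) force `d(f₁ v_i) = d(v_i)`, and `f₁ v_i` is a `G'`-neighbour of `y`; hence
`y` has a `G`-neighbour of degree `d(v_i)`, which lies in `{v₂, …, v_k}` by (5), contradicting (2)
since `y ∈ N(v₁)`. So `f₁` maps `V(G) ∖ N[v₁]` into `V(G') ∖ N'[v₁]`, a set of the same size.
-/

open Finset

namespace SimpleGraph

def Hypomorphic {V : Type*} (G G' : SimpleGraph V) : Prop :=
  ∀ v : V, Nonempty (G.induce {v}ᶜ ≃g G'.induce {v}ᶜ)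

variable {V : Type*} [Fintype V] [DecidableEq V]

theorem card_edgeFinset_induce_compl_singleton_add_degree (G : SimpleGraph V)
    [DecidableRel G.Adj] (v : V) :
    #(G.induce {v}ᶜ).edgeFinset + G.degree v = #G.edgeFinset := by
  rw [card_edgeFinset_induce_compl_singleton, card_edgeFinset_deleteIncidenceSet,
    Nat.sub_add_cancel (G.degree_le_card_edgeFinset v)]

theorem degree_induce_compl_singleton_add (G : SimpleGraph V) [DecidableRel G.Adj] (v : V)
    (x : ({v}ᶜ : Set V)) :
    (G.induce {v}ᶜ).degree x + (if G.Adj x v then 1 else 0) = G.degree x := by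
  rw [← card_neighborFinset_eq_degree, ← card_map, map_neighborFinset_induce,
    ← card_neighborFinset_eq_degree, Set.toFinset_compl, Set.toFinset_singleton,
    ← sdiff_eq_inter_compl, sdiff_singleton_eq_erase]
  split_ifs with h
  · exact card_erase_add_one (by simpa using h)
  · rw [erase_eq_of_notMem (by simpa using h), add_zero]

theorem card_filter_degree_induce_compl_singleton_add (H : SimpleGraph V) [DecidableRel H.Adj]
    (j : V) (d : ℕ) (hgap : ∀ u, H.degree u ≠ d + 1) :
    #{x : ({j}ᶜ : Set V) | (H.induce {j}ᶜ).degree x = d}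
        + #{u ∈ H.neighborFinset j | H.degree u = d}
      = #{u ∈ univ.erase j | H.degree u = d} := by
  have hdel : #{x : ({j}ᶜ : Set V) | (H.induce {j}ᶜ).degree x = d}
      = #{u ∈ {u ∈ univ.erase j | H.degree u = d} | ¬H.Adj u j} := by
    refine card_bij (fun x _ => x.1) (fun x hx => ?_) (fun _ _ _ _ => Subtype.ext) fun u hu => ?_
    · have hdeg := H.degree_induce_compl_singleton_add j x
      simp only [mem_filter, mem_univ, true_and] at hx
      have hadj : ¬H.Adj x j := fun hadj => hgap x (by simp only [hadj, if_true, hx] at hdeg; omega)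
      simp only [hadj, if_false, add_zero, hx] at hdeg
      simp only [mem_filter, mem_univ, mem_erase, and_true]
      exact ⟨⟨x.2, by omega⟩, hadj⟩
    · simp only [mem_filter, mem_univ, mem_erase, and_true] at hu
      refine ⟨⟨u, hu.1.1⟩, ?_, rfl⟩
      have := H.degree_induce_compl_singleton_add j ⟨u, hu.1.1⟩
      simp only [mem_filter, mem_univ, true_and]
      simp only [hu.2, if_false] at this
      omega
  have hnbr : #{u ∈ H.neighborFinset j | H.degree u = d}
      = #{u ∈ {u ∈ univ.erase j | H.degree u = d} | H.Adj u j} := by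
    congr 1; ext u
    simp only [mem_filter, mem_neighborFinset, mem_univ, mem_erase, and_true]
    exact ⟨fun ⟨ha, hd⟩ => ⟨⟨ha.ne', hd⟩, ha.symm⟩, fun ⟨⟨_, hd⟩, ha⟩ => ⟨ha.symm, hd⟩⟩
  rw [hdel, hnbr, add_comm, card_filter_add_card_filter_not]

theorem Iso.degree_coe_apply_add {G G' : SimpleGraph V} [DecidableRel G.Adj]
    [DecidableRel G'.Adj] (hdeg : ∀ u, G'.degree u = G.degree u) {v : V}
    (f : G.induce {v}ᶜ ≃g G'.induce {v}ᶜ) (x : ({v}ᶜ : Set V)) :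
    G.degree (f x) + (if G.Adj x v then 1 else 0)
      = G.degree x + (if G'.Adj (f x) v then 1 else 0) := by
  rw [← hdeg (f x), ← G'.degree_induce_compl_singleton_add v (f x),
    ← G.degree_induce_compl_singleton_add v x, f.degree_eq]
  omega

namespace Hypomorphic

variable {G G' : SimpleGraph V} [DecidableRel G.Adj] [DecidableRel G'.Adj]

theorem card_edgeFinset_add_degree (h : G.Hypomorphic G') (v : V) :
    #G.edgeFinset + G'.degree v = #G'.edgeFinset + G.degree v := by
  obtain ⟨f⟩ := h v
  have := f.card_edgeFinset_eq
  rw [← G.card_edgeFinset_induce_compl_singleton_add_degree v,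
    ← G'.card_edgeFinset_induce_compl_singleton_add_degree v]
  omega

theorem card_edgeFinset_eq (h : G.Hypomorphic G') (hV : Fintype.card V ≠ 2) :
    #G.edgeFinset = #G'.edgeFinset := by
  have hsum := sum_congr rfl fun v (_ : v ∈ univ) => h.card_edgeFinset_add_degree v
  simp only [sum_add_distrib, sum_degrees_eq_twice_card_edges, sum_const, card_univ,
    smul_eq_mul] at hsum
  zify at hsum
  have : ((Fintype.card V : ℤ) - 2) * (#G.edgeFinset - #G'.edgeFinset) = 0 := by
    linear_combination hsum
  have hV' : (Fintype.card V : ℤ) - 2 ≠ 0 := by omega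
  exact_mod_cast sub_eq_zero.mp ((mul_eq_zero.mp this).resolve_left hV')

theorem degree_eq (h : G.Hypomorphic G') (hV : Fintype.card V ≠ 2) (v : V) :
    G'.degree v = G.degree v := by
  have := h.card_edgeFinset_add_degree v
  rw [h.card_edgeFinset_eq hV] at this
  omega

theorem card_neighborFinset_filter_degree_eq (h : G.Hypomorphic G')
    (hdeg : ∀ u, G'.degree u = G.degree u) (j : V) {d : ℕ} (hgap : ∀ u, G.degree u ≠ d + 1) :
    #{u ∈ G'.neighborFinset j | G.degree u = d} = #{u ∈ G.neighborFinset j | G.degree u = d} := by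
  obtain ⟨f⟩ := h j
  have hG := G.card_filter_degree_induce_compl_singleton_add j d hgap
  have hG' := G'.card_filter_degree_induce_compl_singleton_add j d (by simpa only [hdeg] using hgap)
  simp only [hdeg] at hG'
  have hdel : #{x : ({j}ᶜ : Set V) | (G.induce {j}ᶜ).degree x = d}
      = #{x : ({j}ᶜ : Set V) | (G'.induce {j}ᶜ).degree x = d} :=
    card_equiv f.toEquiv fun x => by simp
  omega

theorem exists_adj_degree_iff (h : G.Hypomorphic G') (hdeg : ∀ u, G'.degree u = G.degree u)
    (j : V) {d : ℕ} (hgap : ∀ u, G.degree u ≠ d + 1) :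
    (∃ u, G'.Adj j u ∧ G.degree u = d) ↔ ∃ u, G.Adj j u ∧ G.degree u = d := by
  simpa only [card_pos, filter_nonempty_iff, mem_neighborFinset, exists_prop, eq_iff_iff] using
    congrArg (0 < ·) (h.card_neighborFinset_filter_degree_eq hdeg j hgap)

theorem neighborSet_eq_of_degree_unique (h : G.Hypomorphic G')
    (hdeg : ∀ u, G'.degree u = G.degree u) {v : V}
    (huniq : ∀ w, G.degree w = G.degree v → w = v) (hgap : ∀ w, G.degree w ≠ G.degree v + 1) :
    G'.neighborSet v = G.neighborSet v := by
  ext u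
  have hiff := h.exists_adj_degree_iff hdeg u hgap
  have hunique (H : SimpleGraph V) : (∃ w, H.Adj u w ∧ G.degree w = G.degree v) ↔ H.Adj u v :=
    ⟨fun ⟨w, hw, hdw⟩ => huniq w hdw ▸ hw, fun hv => ⟨v, hv, rfl⟩⟩
  rw [hunique, hunique] at hiff
  simpa only [mem_neighborSet, adj_comm] using hiff

theorem coe_apply_notMem_insert_neighborSet (h : G.Hypomorphic G') (hV : Fintype.card V ≠ 2)
    {v : V} {S : Set V}
    (hcover : (⋃ i ∈ insert v S, insert i (G.neighborSet i)) = Set.univ)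
    (hdisj : insert v (G.neighborSet v) ∩ ⋃ i ∈ S, insert i (G.neighborSet i) = ∅)
    (hgap : ∀ i ∈ insert v S, ∀ w, G.degree w ≠ G.degree i + 1)
    (huniq : ∀ w, G.degree w = G.degree v → w = v)
    (hclass : ∀ i ∈ S, ∀ w, G.degree w = G.degree i → w ∈ S)
    (f : G.induce {v}ᶜ ≃g G'.induce {v}ᶜ) {x : ({v}ᶜ : Set V)}
    (hx : (x : V) ∉ insert v (G.neighborSet v)) :
    (f x : V) ∉ insert v (G'.neighborSet v) := by
  have hdeg := h.degree_eq hV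
  have hsep : ∀ i ∈ S, ∀ y ∈ insert i (G.neighborSet i), y ∉ insert v (G.neighborSet v) :=
    fun i hi y hy hyv => Set.eq_empty_iff_forall_notMem.mp hdisj y ⟨hyv, Set.mem_biUnion hi hy⟩
  intro hy
  have hyv : G'.Adj (f x) v := (hy.resolve_left (f x).2).symm
  have hxv : ¬G.Adj x v := fun hxv => hx (Or.inr hxv.symm)
  have hdy : G.degree (f x) = G.degree x + 1 := by
    simpa [hxv, hyv] using f.degree_coe_apply_add hdeg x
  rw [h.neighborSet_eq_of_degree_unique hdeg huniq (hgap v (Set.mem_insert _ _))] at hy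
  obtain ⟨i, hi, hxi⟩ := Set.mem_iUnion₂.mp (hcover ▸ Set.mem_univ (x : V))
  obtain rfl | hiS := hi
  · exact hx hxi
  have hgapi := hgap i (Or.inr hiS)
  obtain hxi | hxi := hxi
  · exact hgapi (f x) (hxi ▸ hdy)
  have hiv : i ∉ insert v (G.neighborSet v) := hsep i hiS i (Set.mem_insert _ _)
  let i' : ({v}ᶜ : Set V) := ⟨i, fun hi => hiv (Or.inl hi)⟩
  have hdw : G.degree (f i') = G.degree i := by
    have := f.degree_coe_apply_add hdeg i'
    have hiv' : ¬G.Adj i v := fun ha => hiv (Or.inr ha.symm)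
    by_cases hw : G'.Adj (f i') v
    · exact absurd (by simpa [i', hiv', hw] using this) (hgapi (f i'))
    · simpa [i', hiv', hw] using this
  have hwy : G'.Adj (f x) (f i') :=
    (f.map_adj_iff.mpr (show (G.induce {v}ᶜ).Adj i' x from hxi)).symm
  obtain ⟨u, hu, hdu⟩ := (h.exists_adj_degree_iff hdeg (f x) hgapi).mp ⟨f i', hwy, hdw⟩
  exact hsep u (hclass i hiS u hdu) (f x) (Or.inr hu.symm) hy

theorem image_setOf_notMem_insert_neighborSet (h : G.Hypomorphic G')
    (hV : Fintype.card V ≠ 2) {v : V} {S : Set V}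
    (hcover : (⋃ i ∈ insert v S, insert i (G.neighborSet i)) = Set.univ)
    (hdisj : insert v (G.neighborSet v) ∩ ⋃ i ∈ S, insert i (G.neighborSet i) = ∅)
    (hgap : ∀ i ∈ insert v S, ∀ w, G.degree w ≠ G.degree i + 1)
    (huniq : ∀ w, G.degree w = G.degree v → w = v)
    (hclass : ∀ i ∈ S, ∀ w, G.degree w = G.degree i → w ∈ S)
    (f : G.induce {v}ᶜ ≃g G'.induce {v}ᶜ) :
    (fun x : ({v}ᶜ : Set V) => (f x : V)) '' {x | (x : V) ∉ insert v (G.neighborSet v)}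
      = {w | w ∉ insert v (G'.neighborSet v)} := by
  refine Set.eq_of_subset_of_ncard_le ?_ ?_ (Set.toFinite _)
  · rintro _ ⟨x, hx, rfl⟩
    exact h.coe_apply_notMem_insert_neighborSet hV hcover hdisj hgap huniq hclass f hx
  rw [h.neighborSet_eq_of_degree_unique (h.degree_eq hV) huniq (hgap v (Set.mem_insert _ _)),
    Set.ncard_image_of_injective _
      (show Function.Injective fun x => (f x : V) from Subtype.val_injective.comp f.injective),
    ← Set.ncard_image_of_injective _ Subtype.val_injective]
  exact Set.ncard_le_ncard (fun w hw => ⟨⟨w, fun hwv => hw (Or.inl hwv)⟩, hw, rfl⟩)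

end Hypomorphic

end SimpleGraph

/-- Under hypotheses (1)–(5) and the isomorphisms of vertex-deleted subgraphs,
every isomorphism `f_1 : G − v_1 → G' − v'_1` maps `V(G) \ N[v_1]` onto
`V(G') \ N[v'_1]`. Vertices are indexed by `Fin n`, with `v_j` (resp. `v'_j`)
corresponding to index `⟨j-1, _⟩`; in particular `v_1` is `⟨0, _⟩`. -/
theorem stmt_6 (n k : ℕ) (hk1 : 1 < k) (hkn : k < n)
    (G G' : SimpleGraph (Fin n)) [DecidableRel G.Adj] [DecidableRel G'.Adj]
    -- (1) N[v_1] ∪ … ∪ N[v_k] = V(G)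
    (h1 : (⋃ i ∈ {i : Fin n | (i : ℕ) < k},
        insert i (G.neighborSet i)) = Set.univ)
    -- (2) N[v_1] ∩ (N[v_2] ∪ … ∪ N[v_k]) = ∅
    (h2 : insert (⟨0, by omega⟩ : Fin n) (G.neighborSet ⟨0, by omega⟩) ∩
        (⋃ i ∈ {i : Fin n | 0 < (i : ℕ) ∧ (i : ℕ) < k},
          insert i (G.neighborSet i)) = ∅)
    -- (3) |d(v_i) − d(v_j)| ≠ 1 for i ∈ {1,…,k}, j ≠ i
    (h3 : ∀ i j : Fin n, (i : ℕ) < k → j ≠ i →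
        |(G.degree i : ℤ) - (G.degree j : ℤ)| ≠ 1)
    -- (4) v_1 is the unique vertex of degree d(v_1)
    (h4 : ∀ w : Fin n, G.degree w = G.degree ⟨0, by omega⟩ → w = ⟨0, by omega⟩)
    -- (5) every vertex of degree d(v_i), i ∈ {2,…,k}, lies in {v_2,…,v_k}
    (h5 : ∀ i : Fin n, 0 < (i : ℕ) → (i : ℕ) < k →
        ∀ w : Fin n, G.degree w = G.degree i → 0 < (w : ℕ) ∧ (w : ℕ) < k)
    -- G − v_j ≅ G' − v'_j for every j
    (hdel : ∀ j : Fin n,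
        Nonempty (G.induce ({j}ᶜ : Set (Fin n)) ≃g G'.induce ({j}ᶜ : Set (Fin n)))) :
    ∀ f1 : G.induce ({(⟨0, by omega⟩ : Fin n)}ᶜ : Set (Fin n)) ≃g
           G'.induce ({(⟨0, by omega⟩ : Fin n)}ᶜ : Set (Fin n)),
      (fun x : ({(⟨0, by omega⟩ : Fin n)}ᶜ : Set (Fin n)) => ((f1 x : Fin n))) ''
          {x | (x : Fin n) ∉
            insert (⟨0, by omega⟩ : Fin n) (G.neighborSet ⟨0, by omega⟩)} =
        {w : Fin n | w ∉
            insert (⟨0, by omega⟩ : Fin n) (G'.neighborSet ⟨0, by omega⟩)} := by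
  have hS : insert (⟨0, by omega⟩ : Fin n) {i : Fin n | 0 < (i : ℕ) ∧ (i : ℕ) < k}
      = {i : Fin n | (i : ℕ) < k} := by
    ext i
    simp only [Set.mem_insert_iff, Set.mem_ofPred_eq, Fin.ext_iff]
    omega
  have hgap : ∀ i ∈ {i : Fin n | (i : ℕ) < k}, ∀ w, G.degree w ≠ G.degree i + 1 := by
    intro i hi w hw
    exact h3 i w hi (by rintro rfl; omega) (by rw [hw]; push_cast; norm_num)
  exact SimpleGraph.Hypomorphic.image_setOf_notMem_insert_neighborSet hdel
    (by rw [Fintype.card_fin]; omega) (hS ▸ h1) h2 (hS ▸ hgap) h4 fun i hi => h5 i hi.1 hi.2
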